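/- arXiv:2112.07298 — 6 statements merged into one kernel-verified Lean document; each statement's English description precedes it below -/
import Mathlib

section
/- A continuous map f : X → Y into a λ-space Y is closed if and only if for every A ∈ λ the restriction f restricted to f⁻¹(closure A), viewed as a map f⁻¹(closure A) → closure A, is closed. -/
/-- `Y` is a `λ`-space. -/
def IsLambdaSpace (Y : Type*) [TopologicalSpace Y] (l : Set (Set Y)) : Prop :=
  ∀ A : Set Y, IsClosed A ↔
    ∀ B ∈ l, IsClosed (Subtype.val ⁻¹' A : Set (closure B))

theorem isClosedMap_iff_restrictions {X Y : Type*} [TopologicalSpace X] [TopologicalSpace Y]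
    (l : Set (Set Y)) (hY : IsLambdaSpace Y l) (f : X → Y) (hf : Continuous f) :
    IsClosedMap f ↔
      ∀ A ∈ l, IsClosedMap
        (Set.MapsTo.restrict f (f ⁻¹' closure A) (closure A)
          (Set.mapsTo_preimage f (closure A))) := by
  constructor
  · intro hc A _
    exact hc.restrictPreimage (closure A)
  · intro h F hF
    rw [hY]
    intro B hB
    have hS : IsClosed (Subtype.val ⁻¹' F : Set (f ⁻¹' closure B)) :=
      hF.preimage continuous_subtype_val
    have himg := h B hB _ hS
    have heq : (Set.MapsTo.restrict f (f ⁻¹' closure B) (closure B)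
          (Set.mapsTo_preimage f (closure B))) '' (Subtype.val ⁻¹' F)
        = (Subtype.val ⁻¹' (f '' F) : Set (closure B)) := by
      ext ⟨y, hy⟩
      simp only [Set.mem_image, Set.mem_preimage, Set.MapsTo.restrict, Subtype.map,
        Subtype.mk.injEq, Subtype.exists]
      constructor
      · rintro ⟨x, hxB, hxF, rfl⟩
        exact ⟨x, hxF, rfl⟩
      · rintro ⟨x, hxF, rfl⟩
        exact ⟨x, hy, hxF, rfl⟩
    rwa [heq] at himg
end

section
/- Let X be a topological space with a cover λ. If X is a λ_R-space (every real-valued function on X whose restriction to each closure of an element of λ is continuous is itself continuous), then for every map f from X to a completely regular Hausdorff (Tychonoff) space Y, f is continuous whenever each restriction f∣closure(A), A ∈ λ, is continuous. -/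
theorem lambdaR_implies_lambdaF {X : Type u} [TopologicalSpace X]
    (l : Set (Set X)) (hcov : ⋃₀ l = Set.univ)
    (hR : ∀ g : X → ℝ,
      (∀ A ∈ l, Continuous ((closure A).restrict g)) → Continuous g) :
    ∀ (Y : Type v) [TopologicalSpace Y] [T35Space Y] (f : X → Y),
      (∀ A ∈ l, Continuous ((closure A).restrict f)) → Continuous f := by
  intro Y _ _ f hf
  rw [continuous_def]
  intro U hU
  rw [isOpen_iff_mem_nhds]
  intro x hx
  obtain ⟨g, hg, hgx, hgU⟩ := CompletelyRegularSpace.completely_regular (f x) Uᶜ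
    hU.isClosed_compl (by simpa using hx)
  set G : X → ℝ := fun z => (g (f z) : ℝ) with hG
  have hGc : Continuous G := by
    apply hR
    intro A hA
    have : (closure A).restrict G =
        (fun t : unitInterval => (t : ℝ)) ∘ g ∘ (closure A).restrict f := rfl
    rw [this]
    exact continuous_subtype_val.comp (hg.comp (hf A hA))
  have hopen : IsOpen (G ⁻¹' Set.Iio 1) := isOpen_Iio.preimage hGc
  apply Filter.mem_of_superset (hopen.mem_nhds (by simp [G, hgx]))
  intro z hz
  by_contra hzU
  have := hgU (by simpa using hzU)
  simp only [G, Set.mem_preimage, Set.mem_Iio, this] at hz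
  exact absurd hz (by norm_num)
end

section
/- Let X be a Hausdorff λ_f-space where λ is a cover of X closed under finite unions, subsets, and closures, and let (Y,μ) be a Hausdorff uniform space. Then C(X,Y) with the uniformity of uniform convergence on elements of λ is uniformly isomorphic to the inverse limit of the system {C(closure(A),Y) : A ∈ λ} with restriction maps as bonding maps, each factor carrying the uniformity of uniform convergence. -/
open Filter Set Topology unitInterval Uniformity UniformConvergence
open scoped SetRel

/-- A chain of symmetric entourages below a given entourage. -/
lemma exists_entourage_chain {α : Type*} [UniformSpace α] {V : Set (α × α)} (hV : V ∈ 𝓤 α) :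
    ∃ W : ℕ → Set (α × α), (∀ n, W n ∈ 𝓤 α) ∧ (∀ n, SetRel.IsSymm (W n)) ∧ W 0 ⊆ V ∧
      ∀ n, W (n + 1) ○ W (n + 1) ⊆ W n := by
  have key : ∀ s : {s : Set (α × α) // s ∈ 𝓤 α ∧ SetRel.IsSymm s},
      ∃ t : {s : Set (α × α) // s ∈ 𝓤 α ∧ SetRel.IsSymm s}, t.1 ○ t.1 ⊆ s.1 := by
    intro s
    obtain ⟨t, ht, hts, htc⟩ := comp_symm_mem_uniformity_sets s.2.1
    exact ⟨⟨t, ht, hts⟩, htc⟩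
  choose next hnext using key
  refine ⟨fun n => (Nat.rec ⟨SetRel.symmetrize V, symmetrize_mem_uniformity hV,
      inferInstance⟩ (fun _ t => next t) n :
      {s : Set (α × α) // s ∈ 𝓤 α ∧ SetRel.IsSymm s}).1,
    fun n => ?_, fun n => ?_, SetRel.symmetrize_subset_self, fun n => hnext _⟩
  · exact (Nat.rec _ _ n : {s : Set (α × α) // s ∈ 𝓤 α ∧ SetRel.IsSymm s}).2.1
  · exact (Nat.rec _ _ n : {s : Set (α × α) // s ∈ 𝓤 α ∧ SetRel.IsSymm s}).2.2

/-- Given an entourage `V` of a uniform space, there is a pseudometric structure whose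
uniformity is coarser than the given one and contains `V`. -/
lemma exists_pseudoMetric_le {α : Type*} [u : UniformSpace α] {V : Set (α × α)}
    (hV : V ∈ 𝓤 α) :
    ∃ m : PseudoMetricSpace α, 𝓤[u] ≤ 𝓤[m.toUniformSpace] ∧ V ∈ 𝓤[m.toUniformSpace] := by
  obtain ⟨W, hWmem, hWsymm, hW0, hWc⟩ := exists_entourage_chain hV
  have hWid : ∀ n, SetRel.id ⊆ W n := fun n => refl_le_uniformity (hWmem n)
  have hWanti : ∀ n, W (n + 1) ⊆ W n := fun n =>
    (by have := isRefl_of_mem_uniformity (hWmem (n + 1)); exact SetRel.left_subset_comp :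
      W (n + 1) ⊆ W (n + 1) ○ W (n + 1)).trans (hWc n)
  have hdir : Directed (· ≥ ·) W := (antitone_nat_of_succ_le hWanti).directed_ge
  have hbasis : (⨅ n, 𝓟 (W n)).HasBasis (fun _ : ℕ => True) W :=
    hasBasis_iInf_principal hdir
  let core : UniformSpace.Core α := UniformSpace.Core.mk' (⨅ n, 𝓟 (W n))
    (fun r hr y => by
      obtain ⟨n, -, hn⟩ := hbasis.mem_iff.1 hr
      exact hn (hWid n rfl))
    (fun r hr => by
      obtain ⟨n, -, hn⟩ := hbasis.mem_iff.1 hr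
      exact mem_of_superset (hbasis.mem_of_mem (i := n) trivial)
        (fun p hp => hn ((hWsymm n).symm p.1 p.2 hp)))
    (fun r hr => by
      obtain ⟨n, -, hn⟩ := hbasis.mem_iff.1 hr
      exact ⟨W (n + 1), hbasis.mem_of_mem (i := n + 1) trivial, (hWc n).trans hn⟩)
  have hcg : IsCountablyGenerated (𝓤[UniformSpace.ofCore core]) := by
    show IsCountablyGenerated (⨅ n, 𝓟 (W n))
    infer_instance
  obtain ⟨m, hm⟩ := @UniformSpace.metrizable_uniformity α (UniformSpace.ofCore core) hcg
  have hmF : 𝓤[m.toUniformSpace] = ⨅ n, 𝓟 (W n) := by rw [hm]; rfl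
  refine ⟨m, ?_, ?_⟩
  · rw [hmF]
    exact le_iInf fun n => le_principal_iff.2 (hWmem n)
  · rw [hmF]
    exact mem_of_superset (hbasis.mem_of_mem (i := 0) trivial) hW0

/-- A real-valued "separating" function for an entourage. -/
lemma exists_sep_fun {α : Type*} [u : UniformSpace α] {V : Set (α × α)} (hV : V ∈ 𝓤 α)
    (x : α) :
    ∃ D : α → ℝ, ∃ ε : ℝ, 0 < ε ∧ Continuous D ∧ D x = 0 ∧
      ∀ y, (x, y) ∉ V → ε ≤ D y := by
  obtain ⟨m, hle, hVm⟩ := exists_pseudoMetric_le hV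
  obtain ⟨ε, hε, hball⟩ := (@Metric.mem_uniformity_dist α m _).1 hVm
  refine ⟨fun y => @dist α m.toDist x y, ε, hε, ?_, @dist_self α m x, ?_⟩
  · have hducm : @UniformContinuous α ℝ m.toUniformSpace _
        (fun y => @dist α m.toDist x y) :=
      @UniformContinuous.dist α α m m.toUniformSpace _ _
        (@uniformContinuous_const α α m.toUniformSpace m.toUniformSpace x)
        (@uniformContinuous_id α m.toUniformSpace)
    exact @UniformContinuous.continuous α ℝ u _ _ (Filter.Tendsto.mono_left hducm hle)
  · intro y hy
    exact le_of_not_gt fun h => hy (hball h)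

lemma uniformSpace_completelyRegular {α : Type*} [u : UniformSpace α] :
    CompletelyRegularSpace α := by
  constructor
  intro x K hK hx
  obtain ⟨V, hV, hVK⟩ : ∃ V ∈ 𝓤 α, UniformSpace.ball x V ⊆ Kᶜ :=
    UniformSpace.mem_nhds_iff.mp (hK.isOpen_compl.mem_nhds hx)
  obtain ⟨D, ε, hε, hDc, hD0, hDge⟩ := exists_sep_fun hV x
  refine ⟨fun y => projIcc 0 1 zero_le_one (D y / ε), ?_, ?_, ?_⟩
  · exact continuous_projIcc.comp (hDc.div_const ε)
  · simp [hD0, projIcc_left]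
  · intro y hy
    have hxy : (x, y) ∉ V := fun h => hVK h hy
    have h1 : (1 : ℝ) ≤ D y / ε := (one_le_div hε).2 (hDge y hxy)
    simp only [Pi.one_apply]
    rw [projIcc_of_right_le _ h1]
    rfl

universe u v

/-- The uniformity of uniform convergence on elements of `l` on `C(X,Y)`. -/
def uniformConvOn (X Y : Type*) [TopologicalSpace X] [UniformSpace Y]
    (l : Set (Set X)) : UniformSpace C(X, Y) :=
  UniformSpace.comap (fun h : C(X, Y) => UniformOnFun.ofFun l ⇑h)
    (UniformOnFun.uniformSpace X Y l)

/-- The uniformity of uniform convergence (on the whole domain) on `C(K,Y)`. -/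
def uniformConvAll (K Y : Type*) [TopologicalSpace K] [UniformSpace Y] :
    UniformSpace C(K, Y) :=
  UniformSpace.comap (fun h : C(K, Y) => UniformFun.ofFun ⇑h)
    (UniformFun.uniformSpace K Y)

/-- The inverse limit of the system `{C(closure A, Y) : A ∈ l}` with restriction
bonding maps: the set of compatible families. -/
def InvLim (X Y : Type*) [TopologicalSpace X] [UniformSpace Y]
    (l : Set (Set X)) : Type _ :=
  {u : (A : l) → C(closure (A : Set X), Y) //
    ∀ (A B : l) (h : closure (B : Set X) ⊆ closure (A : Set X)),
      (u A).comp ⟨Set.inclusion h, continuous_inclusion h⟩ = u B}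

/-- The inverse-limit uniformity: subspace of the product of the uniformities of
uniform convergence. -/
def invLimUniformSpace (X Y : Type*) [TopologicalSpace X] [UniformSpace Y]
    (l : Set (Set X)) : UniformSpace (InvLim X Y l) :=
  UniformSpace.comap Subtype.val
    (@Pi.uniformSpace l (fun A => C(closure (A : Set X), Y))
      (fun _ => uniformConvAll _ Y))



lemma uc_into_uniformOnFun {γ X' Y' : Type*} (uγ : UniformSpace γ) [UniformSpace Y']
    (l' : Set (Set X')) (φ : γ → (X' →ᵤ[l'] Y'))
    (h : ∀ B ∈ l', @UniformContinuous _ _ uγ _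
      (fun x => UniformFun.ofFun (B.restrict (UniformOnFun.toFun l' (φ x))))) :
    @UniformContinuous _ _ uγ _ φ := by
  refine uniformContinuous_iInf_rng.2 fun B => uniformContinuous_iInf_rng.2 fun hB => ?_
  exact uniformContinuous_comap' (h B hB)

set_option maxHeartbeats 2000000 in
theorem uniformConvOn_uniformIso_invLim {X : Type u} {Y : Type v}
    [TopologicalSpace X] [T2Space X] [UniformSpace Y] [T2Space Y]
    (l : Set (Set X)) (hcov : ⋃₀ l = Set.univ)
    (hsub : ∀ A ∈ l, ∀ B ⊆ A, B ∈ l)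
    (hunion : ∀ A ∈ l, ∀ B ∈ l, A ∪ B ∈ l)
    (hclos : ∀ A ∈ l, closure A ∈ l)
    (hLf : ∀ (Z : Type v) [TopologicalSpace Z] [T35Space Z] (g : X → Z),
      (∀ A ∈ l, Continuous ((closure A).restrict g)) → Continuous g) :
    ∃ F : C(X, Y) ≃ InvLim X Y l,
      @UniformContinuous _ _ (uniformConvOn X Y l) (invLimUniformSpace X Y l) F ∧
      @UniformContinuous _ _ (invLimUniformSpace X Y l) (uniformConvOn X Y l)
        F.symm := by
  classical
  haveI hT35 : T35Space Y :=
    { toT0Space := inferInstance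
      toCompletelyRegularSpace := uniformSpace_completelyRegular }
  have hmem : ∀ x : X, ∃ A, A ∈ l ∧ x ∈ A := fun x =>
    Set.mem_sUnion.mp (by rw [hcov]; trivial)
  choose s hsl hxs using hmem
  have hglue_aux : ∀ (u : InvLim X Y l) (A : l) (x : X) (hx : x ∈ closure (A : Set X)),
      (u.1 ⟨s x, hsl x⟩) ⟨x, subset_closure (hxs x)⟩ = u.1 A ⟨x, hx⟩ := by
    intro u A x hx
    have hCl : (s x ∪ closure (A : Set X)) ∈ l := hunion _ (hsl x) _ (hclos _ A.2)
    have h1 : closure (s x) ⊆ closure (s x ∪ closure (A : Set X)) :=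
      closure_mono Set.subset_union_left
    have h2 : closure (A : Set X) ⊆ closure (s x ∪ closure (A : Set X)) :=
      Set.Subset.trans Set.subset_union_right subset_closure
    have e1 := congrFun (congrArg DFunLike.coe
      (u.2 ⟨_, hCl⟩ ⟨s x, hsl x⟩ h1)) ⟨x, subset_closure (hxs x)⟩
    have e2 := congrFun (congrArg DFunLike.coe (u.2 ⟨_, hCl⟩ A h2)) ⟨x, hx⟩
    simp only [ContinuousMap.comp_apply, ContinuousMap.coe_mk] at e1 e2
    rw [← e1, ← e2]
  have hgc : ∀ u : InvLim X Y l,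
      Continuous (fun x => (u.1 ⟨s x, hsl x⟩) ⟨x, subset_closure (hxs x)⟩) := by
    intro u
    refine hLf Y _ ?_
    intro A hA
    have hre : (closure A).restrict
        (fun x => (u.1 ⟨s x, hsl x⟩) ⟨x, subset_closure (hxs x)⟩)
        = fun z : closure A => u.1 ⟨A, hA⟩ z := by
      funext z
      exact hglue_aux u ⟨A, hA⟩ z.1 z.2
    rw [hre]
    exact (u.1 ⟨A, hA⟩).continuous
  refine ⟨{ toFun := fun h =>
              ⟨fun A => h.restrict (closure (A : Set X)), fun A B hAB =>
                ContinuousMap.ext fun z => rfl⟩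
            invFun := fun u =>
              ⟨fun x => (u.1 ⟨s x, hsl x⟩) ⟨x, subset_closure (hxs x)⟩, hgc u⟩
            left_inv := fun h => ContinuousMap.ext fun x => rfl
            right_inv := fun u => Subtype.ext (funext fun A => ContinuousMap.ext fun z =>
              hglue_aux u A z.1 z.2) }, ?_, ?_⟩
  · -- forward uniform continuity
    refine @uniformContinuous_comap' C(X, Y) ((A : l) → C(closure (A : Set X), Y))
      (InvLim X Y l) Subtype.val _
      (@Pi.uniformSpace l (fun A => C(closure (A : Set X), Y)) (fun _ => uniformConvAll _ Y))
      (uniformConvOn X Y l) ?_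
    refine (@uniformContinuous_pi l (fun A => C(closure (A : Set X), Y))
      (fun _ => uniformConvAll _ Y) C(X, Y) (uniformConvOn X Y l) _).2 fun A => ?_
    refine @uniformContinuous_comap' C(X, Y) ((closure (A : Set X)) →ᵤ Y)
      C(closure (A : Set X), Y) (fun f => UniformFun.ofFun ⇑f)
      (fun h => h.restrict (closure (A : Set X)))
      (UniformFun.uniformSpace _ Y) (uniformConvOn X Y l) ?_
    exact @UniformContinuous.comp C(X, Y) (X →ᵤ[l] Y) ((closure (A : Set X)) →ᵤ Y)
      (uniformConvOn X Y l) (UniformOnFun.uniformSpace X Y l) (UniformFun.uniformSpace _ Y)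
      _ _ (UniformOnFun.uniformContinuous_restrict X Y l (hclos _ A.2))
      (@uniformContinuous_comap C(X, Y) (X →ᵤ[l] Y) (fun h => UniformOnFun.ofFun l ⇑h) _)
  · -- backward uniform continuity
    refine @uniformContinuous_comap' (InvLim X Y l) (X →ᵤ[l] Y) C(X, Y)
      (fun h => UniformOnFun.ofFun l ⇑h) _ (UniformOnFun.uniformSpace X Y l)
      (invLimUniformSpace X Y l) ?_
    refine uc_into_uniformOnFun (invLimUniformSpace X Y l) l _ fun B hB => ?_
    show @UniformContinuous _ _ (invLimUniformSpace X Y l) (UniformFun.uniformSpace B Y)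
      (fun u : InvLim X Y l => UniformFun.ofFun
        (B.restrict (fun x => (u.1 ⟨s x, hsl x⟩) ⟨x, subset_closure (hxs x)⟩)))
    have hBsub : B ⊆ closure B := subset_closure
    have hco : (fun u : InvLim X Y l => UniformFun.ofFun
          (B.restrict (fun x => (u.1 ⟨s x, hsl x⟩) ⟨x, subset_closure (hxs x)⟩)))
        = (fun g : (closure B) →ᵤ Y =>
              UniformFun.ofFun (UniformFun.toFun g ∘ Set.inclusion hBsub)) ∘
          (fun f : C(closure B, Y) => UniformFun.ofFun ⇑f) ∘
          (fun p : (A : l) → C(closure (A : Set X), Y) => p ⟨B, hB⟩) ∘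
          (Subtype.val : InvLim X Y l → _) := by
      funext u
      exact funext fun z : B => hglue_aux u ⟨B, hB⟩ z.1 (subset_closure z.2)
    rw [hco]
    refine @UniformContinuous.comp (InvLim X Y l) ((closure B) →ᵤ Y) (B →ᵤ Y)
      (invLimUniformSpace X Y l) (UniformFun.uniformSpace _ Y) (UniformFun.uniformSpace B Y)
      _ _ (@UniformFun.precomp_uniformContinuous (↥(closure B)) Y (↥B) _ (Set.inclusion hBsub)) ?_
    refine @UniformContinuous.comp (InvLim X Y l) C(closure B, Y) ((closure B) →ᵤ Y)
      (invLimUniformSpace X Y l) (uniformConvAll _ Y) (UniformFun.uniformSpace _ Y)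
      _ _ (@uniformContinuous_comap C(closure B, Y) ((closure B) →ᵤ Y)
        (fun f => UniformFun.ofFun ⇑f) _) ?_
    exact @UniformContinuous.comp (InvLim X Y l) ((A : l) → C(closure (A : Set X), Y))
      C(closure B, Y) (invLimUniformSpace X Y l)
      (@Pi.uniformSpace l (fun A => C(closure (A : Set X), Y)) (fun _ => uniformConvAll _ Y))
      (uniformConvAll _ Y) _ _
      (@Pi.uniformContinuous_proj l (fun A => C(closure (A : Set X), Y))
        (fun _ => uniformConvAll _ Y) ⟨B, hB⟩)
      (@uniformContinuous_comap (InvLim X Y l) ((A : l) → C(closure (A : Set X), Y))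
        Subtype.val
        (@Pi.uniformSpace l (fun A => C(closure (A : Set X), Y)) (fun _ => uniformConvAll _ Y)))
end

section
/- Let X be a Hausdorff λ_f-space with λ a cover of X, and let (Y,μ) be a Hausdorff uniform space whose uniformity μ is complete. Then C(X,Y) with the uniformity of uniform convergence on elements of λ is a complete uniform space. -/
open Set Filter Uniformity Topology unitInterval UniformConvergence
open scoped SetRel

section CompletelyRegular

variable {Y : Type*}

private def coarseFilter (V : ℕ → Set (Y × Y)) : Filter (Y × Y) :=
  ⨅ n, 𝓟 (V n)

private theorem coarseFilter_hasBasis {V : ℕ → Set (Y × Y)} (hanti : Antitone V) :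
    (coarseFilter V).HasBasis (fun _ => True) V :=
  hasBasis_iInf_principal hanti.directed_ge

private theorem antitone_of_seq {V : ℕ → Set (Y × Y)}
    (hrefl : ∀ n y, (y, y) ∈ V n) (hcomp : ∀ n, V (n + 1) ○ V (n + 1) ⊆ V n) :
    Antitone V := by
  refine antitone_nat_of_succ_le fun n => ?_
  rintro ⟨a, b⟩ hab
  exact hcomp n ⟨a, hrefl (n + 1) a, hab⟩

/-- The uniform structure generated by a suitable sequence of entourage-like sets. -/
private def coarseUniformity (V : ℕ → Set (Y × Y))
    (hrefl : ∀ n y, (y, y) ∈ V n)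
    (hsymm : ∀ n, SetRel.IsSymm (V n))
    (hcomp : ∀ n, V (n + 1) ○ V (n + 1) ⊆ V n) : UniformSpace Y :=
  UniformSpace.ofCore <| UniformSpace.Core.mk' (coarseFilter V)
    (fun r hr y => by
      rcases (coarseFilter_hasBasis (antitone_of_seq hrefl hcomp)).mem_iff.1 hr
        with ⟨n, -, hn⟩
      exact hn (hrefl n y))
    (fun r hr => by
      rcases (coarseFilter_hasBasis (antitone_of_seq hrefl hcomp)).mem_iff.1 hr
        with ⟨n, -, hn⟩
      refine mem_of_superset
        (((coarseFilter_hasBasis (antitone_of_seq hrefl hcomp))).mem_of_mem (i := n) trivial) ?_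
      rintro ⟨a, b⟩ hp
      exact hn ((hsymm n).symm _ _ hp))
    (fun r hr => by
      rcases (coarseFilter_hasBasis (antitone_of_seq hrefl hcomp)).mem_iff.1 hr
        with ⟨n, -, hn⟩
      exact ⟨V (n + 1),
        ((coarseFilter_hasBasis (antitone_of_seq hrefl hcomp))).mem_of_mem (i := n + 1) trivial,
        (hcomp n).trans hn⟩)

private theorem coarseUniformity_eq (V : ℕ → Set (Y × Y))
    (hrefl : ∀ n y, (y, y) ∈ V n)
    (hsymm : ∀ n, SetRel.IsSymm (V n))
    (hcomp : ∀ n, V (n + 1) ○ V (n + 1) ⊆ V n) :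
    𝓤[coarseUniformity V hrefl hsymm hcomp] = coarseFilter V := rfl

/-- From a suitable sequence of entourages one gets a distance-like function. -/
private theorem exists_good_dist (V : ℕ → Set (Y × Y))
    (hrefl : ∀ n y, (y, y) ∈ V n)
    (hsymm : ∀ n, SetRel.IsSymm (V n))
    (hcomp : ∀ n, V (n + 1) ○ V (n + 1) ⊆ V n) :
    ∃ d : Y → Y → ℝ, (∀ y, d y y = 0) ∧
      (∀ x a b, |d x a - d x b| ≤ d b a) ∧
      (∀ δ : ℝ, 0 < δ → ∃ n, ∀ a b : Y, (a, b) ∈ V n → d a b < δ) ∧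
      ∃ ε > 0, ∀ a b : Y, d a b < ε → (a, b) ∈ V 0 := by
  have hanti : Antitone V := antitone_of_seq hrefl hcomp
  have hcg : @Filter.IsCountablyGenerated _ 𝓤[coarseUniformity V hrefl hsymm hcomp] := by
    rw [coarseUniformity_eq]
    unfold coarseFilter
    infer_instance
  obtain ⟨m, hm⟩ :=
    @UniformSpace.metrizable_uniformity Y (coarseUniformity V hrefl hsymm hcomp) hcg
  have hunif : @uniformity Y m.toUniformSpace = coarseFilter V := by
    rw [hm, coarseUniformity_eq]
  refine ⟨fun a b => @dist Y m.toDist a b, fun y => m.dist_self y, ?_, ?_, ?_⟩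
  · intro x a b
    have h1 := @abs_dist_sub_le Y m a b x
    rwa [@dist_comm Y m a x, @dist_comm Y m b x, @dist_comm Y m a b] at h1
  · intro δ hδ
    have hmem : {p : Y × Y | @dist Y m.toDist p.1 p.2 < δ} ∈ @uniformity Y m.toUniformSpace :=
      @Metric.dist_mem_uniformity Y m δ hδ
    rw [hunif] at hmem
    rcases (coarseFilter_hasBasis hanti).mem_iff.1 hmem with ⟨n, -, hn⟩
    exact ⟨n, fun a b hab => hn hab⟩
  · have hV0 : V 0 ∈ @uniformity Y m.toUniformSpace := by
      rw [hunif]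
      exact (coarseFilter_hasBasis hanti).mem_of_mem (i := 0) trivial
    rcases (@Metric.mem_uniformity_dist Y m _).1 hV0 with ⟨ε, hε, hball⟩
    exact ⟨ε, hε, fun a b hab => hball hab⟩

/-- Every uniform space is completely regular. -/
theorem uniformSpace_completelyRegularSpace (Y : Type*) [u : UniformSpace Y] :
    CompletelyRegularSpace Y := by
  constructor
  intro x K hK hxK
  obtain ⟨U, hU, hUK⟩ := UniformSpace.mem_nhds_iff.1 (hK.isOpen_compl.mem_nhds hxK)
  -- build a decreasing sequence of symmetric entourages
  have hrec : ∀ s : {s : Set (Y × Y) // s ∈ 𝓤 Y},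
      ∃ t : {s : Set (Y × Y) // s ∈ 𝓤 Y}, SetRel.IsSymm t.1 ∧ t.1 ○ t.1 ⊆ s.1 := by
    rintro ⟨s, hs⟩
    rcases comp_symm_mem_uniformity_sets hs with ⟨t, ht, h1, h2⟩
    exact ⟨⟨t, ht⟩, h1, h2⟩
  choose next hnsymm hncomp using hrec
  have hsub : ∀ s : {s : Set (Y × Y) // s ∈ 𝓤 Y}, (next s).1 ⊆ s.1 := by
    rintro s ⟨a, b⟩ hab
    exact hncomp s ⟨a, refl_mem_uniformity (next s).2, hab⟩
  set V : ℕ → {s : Set (Y × Y) // s ∈ 𝓤 Y} := fun n => next^[n + 1] ⟨U, hU⟩ with hVdef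
  have hVsucc : ∀ n, V (n + 1) = next (V n) := fun n => Function.iterate_succ_apply' _ _ _
  have hV0 : V 0 = next ⟨U, hU⟩ := rfl
  have hV0U : (V 0).1 ⊆ U := by rw [hV0]; exact hsub _
  have hrefl : ∀ n y, (y, y) ∈ (V n).1 := fun n y => refl_mem_uniformity (V n).2
  have hVsymm : ∀ n, SetRel.IsSymm (V n).1 := by
    intro n
    cases n with
    | zero => rw [hV0]; exact hnsymm _
    | succ n => rw [hVsucc]; exact hnsymm _
  have hVcomp : ∀ n, (V (n + 1)).1 ○ (V (n + 1)).1 ⊆ (V n).1 := fun n => by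
    rw [hVsucc]; exact hncomp _
  obtain ⟨d, hd0, hdlip, hdsmall, ε, hε, hball⟩ :=
    exists_good_dist (fun n => (V n).1) hrefl hVsymm hVcomp
  -- the function y ↦ d x y is continuous
  have hxc : Continuous (d x) := by
    rw [continuous_iff_continuousAt]
    intro y
    rw [ContinuousAt, Metric.tendsto_nhds]
    intro δ hδ
    rcases hdsmall δ hδ with ⟨n, hn⟩
    filter_upwards [UniformSpace.ball_mem_nhds y (V n).2] with z hz
    calc dist (d x z) (d x y) = |d x z - d x y| := Real.dist_eq _ _
      _ ≤ d y z := hdlip x z y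
      _ < δ := hn y z hz
  -- the separating function
  refine ⟨fun y => Set.projIcc 0 1 zero_le_one (ε⁻¹ * d x y),
    continuous_projIcc.comp ((continuous_mul_left ε⁻¹).comp hxc), ?_, ?_⟩
  · simp [hd0 x]
  · intro y hy
    have hxy : (x, y) ∉ U := fun h => hUK h hy
    have hxy0 : ¬ d x y < ε := fun h => hxy (hV0U (hball x y h))
    have h1 : (1 : ℝ) ≤ ε⁻¹ * d x y := by
      rw [← inv_mul_cancel₀ (ne_of_gt hε)]
      exact mul_le_mul_of_nonneg_left (not_lt.1 hxy0) (by positivity)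
    show Set.projIcc (0:ℝ) 1 zero_le_one (ε⁻¹ * d x y) = 1
    rw [Set.projIcc_of_right_le _ h1]
    rfl

end CompletelyRegular

section Main

variable {X : Type*} {Y : Type*} [TopologicalSpace X] [UniformSpace Y]

/-- `uniformConvOn` as an infimum of pullbacks of uniform-convergence structures. -/
theorem uniformConvOn_eq_iInf (S : Set (Set X)) :
    uniformConvOn X Y S = ⨅ (s : Set X) (_ : s ∈ S), UniformSpace.comap
      (fun h : C(X, Y) => UniformFun.ofFun (s.restrict ⇑h)) (UniformFun.uniformSpace s Y) := by
  show UniformSpace.comap (fun h : C(X, Y) => UniformOnFun.ofFun S ⇑h)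
      (⨅ (s : Set X) (_ : s ∈ S),
        UniformSpace.comap (UniformFun.ofFun ∘ s.restrict ∘ UniformOnFun.toFun S)
          (UniformFun.uniformSpace s Y)) = _
  simp_rw [UniformSpace.comap_iInf, ← UniformSpace.comap_comap]
  rfl

/-- Uniform convergence of continuous maps on a set implies (as a uniform structure)
uniform convergence on its closure, thanks to closed entourages forming a basis. -/
theorem comap_le_comap_closure (A : Set X) :
    UniformSpace.comap (fun h : C(X, Y) => UniformFun.ofFun (A.restrict ⇑h))
        (UniformFun.uniformSpace A Y)
      ≤ UniformSpace.comap (fun h : C(X, Y) => UniformFun.ofFun ((closure A).restrict ⇑h))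
        (UniformFun.uniformSpace (closure A) Y) := by
  rw [UniformSpace.le_def, uniformity_comap, uniformity_comap]
  refine ((UniformFun.hasBasis_uniformity_of_basis (closure A) Y
    (uniformity_hasBasis_closed (α := Y))).comap _).ge_iff.2 ?_
  rintro M ⟨hM, hMc⟩
  have hgen : UniformFun.gen A Y M ∈ 𝓤 (↥A →ᵤ Y) :=
    (UniformFun.hasBasis_uniformity A Y).mem_of_mem hM
  refine mem_of_superset (preimage_mem_comap hgen) ?_
  rintro ⟨f, g⟩ hfg
  rintro ⟨z, hz⟩
  -- the set where (f, g) lies in the closed entourage M is closed and contains A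
  have hCclosed : IsClosed {t : X | (f t, g t) ∈ M} :=
    IsClosed.preimage (f.continuous.prodMk g.continuous) hMc
  have hsub : closure A ⊆ {t : X | (f t, g t) ∈ M} :=
    closure_minimal (fun t ht => hfg ⟨t, ht⟩) hCclosed
  exact hsub hz

theorem uniformConvOn_complete {X : Type u} {Y : Type v}
    [TopologicalSpace X] [T2Space X] [UniformSpace Y] [T2Space Y] [CompleteSpace Y]
    (l : Set (Set X)) (hcov : ⋃₀ l = Set.univ)
    (hLf : ∀ (Z : Type v) [TopologicalSpace Z] [T35Space Z] (g : X → Z),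
      (∀ A ∈ l, Continuous ((closure A).restrict g)) → Continuous g) :
    @CompleteSpace C(X, Y) (uniformConvOn X Y l) := by
  classical
  haveI : CompletelyRegularSpace Y := uniformSpace_completelyRegularSpace Y
  haveI : T35Space Y := ⟨⟩
  set l' : Set (Set X) := l ∪ (closure '' l) with hl'def
  -- Step 1: the two uniform structures agree
  have key : uniformConvOn X Y l = uniformConvOn X Y l' := by
    rw [uniformConvOn_eq_iInf, uniformConvOn_eq_iInf]
    apply le_antisymm
    · refine le_iInf₂ fun s hs => ?_
      rcases hs with hs | ⟨A, hA, rfl⟩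
      · exact iInf₂_le s hs
      · exact le_trans (iInf₂_le A hA) (comap_le_comap_closure A)
    · exact le_iInf₂ fun s hs => iInf₂_le s (Or.inl hs)
  rw [key]
  -- Step 2: completeness w.r.t. `l'`
  letI : UniformSpace C(X, Y) := uniformConvOn X Y l'
  have hUI : IsUniformInducing (fun h : C(X, Y) => UniformOnFun.ofFun l' ⇑h) := ⟨rfl⟩
  have : CompleteSpace C(X, Y) := by
    rw [completeSpace_iff_isComplete_range hUI]
    have hrange : Set.range (fun h : C(X, Y) => UniformOnFun.ofFun l' ⇑h)
        = {f : X →ᵤ[l'] Y | Continuous (UniformOnFun.toFun l' f)} := by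
      ext f
      constructor
      · rintro ⟨h, rfl⟩
        exact h.continuous
      · intro hf
        exact ⟨⟨UniformOnFun.toFun l' f, hf⟩, rfl⟩
    rw [hrange]
    refine IsClosed.isComplete ?_
    -- the set of continuous functions is closed for uniform convergence on `l'`
    refine isClosed_iff_forall_filter.2 fun f F hFne hFS hFf => ?_
    haveI := hFne
    rw [← tendsto_id', UniformOnFun.tendsto_iff_tendstoUniformlyOn] at hFf
    refine hLf Y (UniformOnFun.toFun l' f) fun A hA => ?_
    refine continuousOn_iff_continuous_restrict.1 ?_
    refine (hFf (closure A) (Or.inr ⟨A, hA, rfl⟩)).continuousOn ?_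
    exact (Filter.Eventually.mono (Filter.le_principal_iff.1 hFS)
      fun g hg => hg.continuousOn).frequently
  exact this

end Main
end

section
/- Let Y be a Hausdorff topological ring with natural uniformity μ (of its additive group), X a Hausdorff space, and λ a family of subsets of X closed under finite unions and subsets. Then C(X,Y) with the topology of uniform convergence on elements of λ is a topological ring under pointwise operations if and only if for every A ∈ λ and every continuous f : X → Y, the set f(A) is bounded in Y. -/
open Topology Filter Uniformity Set

/-- A subset `B` of a topological ring is bounded if for every neighborhood `V` of `0`
there is a neighborhood `W` of `0` with `W*B ⊆ V` and `B*W ⊆ V`. -/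
def RingBounded (Y : Type*) [Ring Y] [TopologicalSpace Y] (B : Set Y) : Prop :=
  ∀ V ∈ 𝓝 (0 : Y), ∃ W ∈ 𝓝 (0 : Y), ∀ w ∈ W, ∀ b ∈ B, w * b ∈ V ∧ b * w ∈ V

theorem uniformConvOn_topologicalRing_iff {X Y : Type*} [TopologicalSpace X]
    [T2Space X] [Ring Y] [TopologicalSpace Y] [IsTopologicalRing Y] [T2Space Y]
    (l : Set (Set X))
    (hsub : ∀ A ∈ l, ∀ B ⊆ A, B ∈ l)
    (hunion : ∀ A ∈ l, ∀ B ∈ l, A ∪ B ∈ l) :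
    @IsTopologicalRing C(X, Y)
      (@uniformConvOn X Y _ (IsTopologicalAddGroup.rightUniformSpace Y) l).toTopologicalSpace
      inferInstance ↔
    ∀ A ∈ l, ∀ f : C(X, Y), RingBounded Y (f '' A) := by
  letI : UniformSpace Y := IsTopologicalAddGroup.rightUniformSpace Y
  haveI : IsUniformAddGroup Y := isUniformAddGroup_of_addCommGroup
  letI : UniformSpace C(X, Y) := uniformConvOn X Y l
  letI : TopologicalSpace C(X, Y) :=
    (@uniformConvOn X Y _ (IsTopologicalAddGroup.rightUniformSpace Y) l).toTopologicalSpace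
  set e : C(X, Y) → UniformOnFun X Y l := fun h => UniformOnFun.ofFun l ⇑h with he
  have hnhds : ∀ h : C(X, Y), 𝓝 h = Filter.comap e (𝓝 (e h)) := by
    intro h
    exact nhds_induced e h
  -- membership of basic sets in nbhd filters
  have hkey : ∀ (h : C(X, Y)), ∀ A ∈ l, ∀ W ∈ 𝓝 (0 : Y),
      {h' : C(X, Y) | ∀ x ∈ A, h' x - h x ∈ W} ∈ 𝓝 h := by
    intro h A hA W hW
    have h1 : Tendsto e (𝓝 h) (𝓝 (e h)) := by
      rw [hnhds h]; exact tendsto_comap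
    have h2 := (UniformOnFun.tendsto_iff_tendstoUniformlyOn.mp h1) A hA
    have hu : {q : Y × Y | q.2 - q.1 ∈ W} ∈ 𝓤 Y := by
      rw [uniformity_eq_comap_nhds_zero]; exact preimage_mem_comap hW
    filter_upwards [h2 _ hu] with h' hh' x hx using hh' x hx
  -- continuity of const
  have hconst : Tendsto (fun w : Y => (ContinuousMap.const X w : C(X, Y))) (𝓝 0)
      (𝓝 (0 : C(X, Y))) := by
    rw [hnhds, tendsto_comap_iff, UniformOnFun.tendsto_iff_tendstoUniformlyOn]
    intro A hA u hu
    filter_upwards [UniformSpace.ball_mem_nhds (0 : Y) hu] with w hw x _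
    exact hw
  constructor
  · intro hTR A hA f V hV
    haveI := hTR
    have hB : {h : C(X, Y) | ∀ x ∈ A, h x ∈ V} ∈ 𝓝 (0 : C(X, Y)) := by
      filter_upwards [hkey 0 A hA V hV] with h hh x hx using by simpa using hh x hx
    have hmul : Continuous fun p : C(X, Y) × C(X, Y) => p.1 * p.2 := continuous_mul
    have h1 : Tendsto (fun p : C(X, Y) × C(X, Y) => p.1 * p.2) (𝓝 (0, f))
        (𝓝 (0 : C(X, Y))) := by simpa using hmul.tendsto (0, f)
    have h2 : Tendsto (fun p : C(X, Y) × C(X, Y) => p.1 * p.2) (𝓝 (f, 0))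
        (𝓝 (0 : C(X, Y))) := by simpa using hmul.tendsto (f, 0)
    rcases mem_nhds_prod_iff.mp (h1 hB) with ⟨U₁, hU₁, U₂, hU₂, hsub1⟩
    rcases mem_nhds_prod_iff.mp (h2 hB) with ⟨U₁', hU₁', U₂', hU₂', hsub2⟩
    refine ⟨(fun w : Y => (ContinuousMap.const X w : C(X, Y))) ⁻¹' (U₁ ∩ U₂'),
      hconst (inter_mem hU₁ hU₂'), ?_⟩
    rintro w hw b ⟨x, hx, rfl⟩
    constructor
    · have : ((ContinuousMap.const X w : C(X, Y)), f) ∈ U₁ ×ˢ U₂ :=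
        ⟨hw.1, mem_of_mem_nhds hU₂⟩
      simpa using hsub1 this x hx
    · have : (f, (ContinuousMap.const X w : C(X, Y))) ∈ U₁' ×ˢ U₂' :=
        ⟨mem_of_mem_nhds hU₁', hw.2⟩
      simpa using hsub2 this x hx
  · intro hb
    -- continuity of operations
    have hproj : ∀ (f g : C(X, Y)), ∀ A ∈ l,
        TendstoUniformlyOn (fun (p : C(X, Y) × C(X, Y)) x => p.1 x) (⇑f)
          (𝓝 (f, g)) A ∧
        TendstoUniformlyOn (fun (p : C(X, Y) × C(X, Y)) x => p.2 x) (⇑g)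
          (𝓝 (f, g)) A := by
      intro f g A hA
      have t1 : Tendsto (e ∘ Prod.fst) (𝓝 (f, g)) (𝓝 (e f)) := by
        have h0 : Tendsto (Prod.fst : C(X, Y) × C(X, Y) → C(X, Y)) (𝓝 (f, g)) (𝓝 f) := by
          rw [nhds_prod_eq]; exact tendsto_fst
        rw [hnhds f] at h0
        exact tendsto_comap.comp h0
      have t2 : Tendsto (e ∘ Prod.snd) (𝓝 (f, g)) (𝓝 (e g)) := by
        have h0 : Tendsto (Prod.snd : C(X, Y) × C(X, Y) → C(X, Y)) (𝓝 (f, g)) (𝓝 g) := by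
          rw [nhds_prod_eq]; exact tendsto_snd
        rw [hnhds g] at h0
        exact tendsto_comap.comp h0
      exact ⟨(UniformOnFun.tendsto_iff_tendstoUniformlyOn.mp t1) A hA,
        (UniformOnFun.tendsto_iff_tendstoUniformlyOn.mp t2) A hA⟩
    have cont_of : ∀ (op : C(X, Y) × C(X, Y) → C(X, Y)),
        (∀ (f g : C(X, Y)), ∀ A ∈ l,
          TendstoUniformlyOn (fun (p : C(X, Y) × C(X, Y)) x => op p x)
            (fun x => op (f, g) x) (𝓝 (f, g)) A) →
        Continuous op := by
      intro op h
      rw [continuous_iff_continuousAt]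
      rintro ⟨f, g⟩
      unfold ContinuousAt
      rw [hnhds, tendsto_comap_iff, UniformOnFun.tendsto_iff_tendstoUniformlyOn]
      intro A hA
      exact h f g A hA
    haveI : ContinuousAdd C(X, Y) := by
      refine ⟨cont_of _ ?_⟩
      intro f g A hA
      obtain ⟨h1, h2⟩ := hproj f g A hA
      exact h1.add h2
    haveI : ContinuousNeg C(X, Y) := by
      refine ⟨continuous_iff_continuousAt.mpr fun f => ?_⟩
      unfold ContinuousAt
      have : (fun a : C(X, Y) => -a) f = -f := rfl
      rw [this, hnhds (-f), tendsto_comap_iff,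
        UniformOnFun.tendsto_iff_tendstoUniformlyOn]
      intro A hA
      have h1 : Tendsto e (𝓝 f) (𝓝 (e f)) := by rw [hnhds f]; exact tendsto_comap
      exact uniformContinuous_neg.comp_tendstoUniformlyOn ((UniformOnFun.tendsto_iff_tendstoUniformlyOn.mp h1) A hA)
    haveI : ContinuousMul C(X, Y) := by
      refine ⟨cont_of _ ?_⟩
      intro f g A hA
      obtain ⟨h1, h2⟩ := hproj f g A hA
      intro u hu
      rw [uniformity_eq_comap_nhds_zero] at hu
      rcases hu with ⟨V, hV, hVu⟩
      rcases exists_nhds_zero_half hV with ⟨V₁, hV₁, hV₁add⟩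
      rcases exists_nhds_zero_half hV₁ with ⟨V₂, hV₂, hV₂add⟩
      set V₃ := V₁ ∩ V₂ with hV₃def
      have hV₃ : V₃ ∈ 𝓝 (0 : Y) := inter_mem hV₁ hV₂
      -- W₀ : products of small things small
      have hm : Tendsto (fun p : Y × Y => p.1 * p.2) (𝓝 (0, 0)) (𝓝 (0 : Y)) := by
        simpa using (continuous_mul (M := Y)).tendsto (0, 0)
      rcases mem_nhds_prod_iff.mp (hm hV₃) with ⟨Wa, hWa, Wb, hWb, hWab⟩
      rcases hb A hA g V₃ hV₃ with ⟨W₁, hW₁, hW₁p⟩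
      rcases hb A hA f V₃ hV₃ with ⟨W₂, hW₂, hW₂p⟩
      set W := Wa ∩ Wb ∩ W₁ ∩ W₂ with hWdef
      have hW : W ∈ 𝓝 (0 : Y) := inter_mem (inter_mem (inter_mem hWa hWb) hW₁) hW₂
      have hWent : {q : Y × Y | q.2 - q.1 ∈ W} ∈ 𝓤 Y := by
        rw [uniformity_eq_comap_nhds_zero]; exact preimage_mem_comap hW
      filter_upwards [h1 _ hWent, h2 _ hWent] with p hp1 hp2 x hx
      apply hVu
      show p.1 x * p.2 x - f x * g x ∈ V
      have key : p.1 x * p.2 x - f x * g x =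
          (p.1 x - f x) * (p.2 x - g x) +
            ((p.1 x - f x) * g x + f x * (p.2 x - g x)) := by noncomm_ring
      rw [key]
      have m1 : (p.1 x - f x) * (p.2 x - g x) ∈ V₃ := by
        have hpair : ((p.1 x - f x, p.2 x - g x) : Y × Y) ∈ Wa ×ˢ Wb :=
          ⟨(hp1 x hx).1.1.1, (hp2 x hx).1.1.2⟩
        exact hWab hpair
      have m2 : (p.1 x - f x) * g x ∈ V₃ :=
        (hW₁p _ (hp1 x hx).1.2 _ ⟨x, hx, rfl⟩).1
      have m3 : f x * (p.2 x - g x) ∈ V₃ :=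
        (hW₂p _ (hp2 x hx).2 _ ⟨x, hx, rfl⟩).2
      exact hV₁add _ m1.1 _ (hV₂add _ m2.2 _ m3.2)
    haveI : IsTopologicalSemiring C(X, Y) := ⟨⟩
    exact ⟨⟩
end

section
/- Let Y be a (real) topological vector space with natural additive uniformity μ, X a topological space, and λ a cover of X closed under finite unions and subsets. Then C(X,Y) with the topology of uniform convergence on elements of λ is a topological vector space under pointwise operations if and only if for every A ∈ λ and every continuous f : X → Y, the set f(A) is bounded in Y. -/
open Filter Topology Bornology
open scoped UniformConvergence Uniformity


theorem uniformConvOn_tvs_iff {X Y : Type*} [TopologicalSpace X]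
    [AddCommGroup Y] [Module ℝ Y] [TopologicalSpace Y] [IsTopologicalAddGroup Y]
    [ContinuousSMul ℝ Y]
    (l : Set (Set X)) (hcov : ⋃₀ l = Set.univ)
    (hsub : ∀ A ∈ l, ∀ B ⊆ A, B ∈ l)
    (hunion : ∀ A ∈ l, ∀ B ∈ l, A ∪ B ∈ l) :
    (@IsTopologicalAddGroup C(X, Y)
        (@uniformConvOn X Y _ (IsTopologicalAddGroup.rightUniformSpace Y) l).toTopologicalSpace
        inferInstance ∧
      @ContinuousSMul ℝ C(X, Y) _ _
        (@uniformConvOn X Y _ (IsTopologicalAddGroup.rightUniformSpace Y) l).toTopologicalSpace) ↔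
    ∀ A ∈ l, ∀ f : C(X, Y), Bornology.IsVonNBounded ℝ (f '' A) := by
  letI uY : UniformSpace Y := IsTopologicalAddGroup.rightUniformSpace Y
  haveI : IsUniformAddGroup Y := isUniformAddGroup_of_addCommGroup
  letI uC : UniformSpace C(X, Y) := uniformConvOn X Y l
  letI tC : TopologicalSpace C(X, Y) := uC.toTopologicalSpace
  have hind : IsInducing (fun h : C(X, Y) => UniformOnFun.ofFun l ⇑h) :=
    ⟨rfl⟩
  constructor
  · rintro ⟨hadd, hsmul⟩ A hA f
    haveI := hsmul
    intro V hV
    -- the set of continuous maps sending A into V is a neighborhood of 0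
    have hN : {g : C(X, Y) | ∀ x ∈ A, g x ∈ V} ∈ 𝓝 (0 : C(X, Y)) := by
      have hq : Continuous (fun h : X →ᵤ[l] Y =>
          UniformFun.ofFun (A.restrict (UniformOnFun.toFun l h))) :=
        (UniformOnFun.uniformContinuous_restrict X Y l hA).continuous
      have hB : {h : ↥A →ᵤ Y | ∀ a, UniformFun.toFun h a ∈ V} ∈ 𝓝 (0 : ↥A →ᵤ Y) :=
        UniformFun.hasBasis_nhds_zero.mem_of_mem hV
      have h0 : (fun h : X →ᵤ[l] Y =>
          UniformFun.ofFun (A.restrict (UniformOnFun.toFun l h))) 0 = 0 := rfl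
      have h1 : {h : X →ᵤ[l] Y | ∀ x ∈ A, UniformOnFun.toFun l h x ∈ V} ∈
          𝓝 (0 : X →ᵤ[l] Y) := by
        have := hq.continuousAt (x := (0 : X →ᵤ[l] Y))
        have h2 := this (h0 ▸ hB)
        refine mem_of_superset h2 ?_
        intro h hh x hx
        exact hh ⟨x, hx⟩
      rw [hind.nhds_eq_comap]
      exact Filter.preimage_mem_comap h1
    have h1 : Filter.Tendsto (fun p : ℝ × C(X, Y) => p.1 • p.2) (𝓝 (0, f))
        (𝓝 (0 : C(X, Y))) := by
      have := continuous_smul.tendsto ((0 : ℝ), f)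
      rwa [zero_smul] at this
    have h2 := h1 hN
    rw [Filter.mem_map, nhds_prod_eq, Filter.mem_prod_iff] at h2
    obtain ⟨t, ht, w, hw, hsub2⟩ := h2
    obtain ⟨ε, hε, hball⟩ := Metric.mem_nhds_iff.1 ht
    have key : ∀ c : ℝ, ‖c‖ < ε → ∀ x ∈ A, c • f x ∈ V := by
      intro c hc x hx
      have hmem : (c, f) ∈ t ×ˢ w :=
        ⟨hball (by simpa [Real.norm_eq_abs] using hc), mem_of_mem_nhds hw⟩
      exact hsub2 hmem x hx
    refine absorbs_iff_norm.2 ⟨2 / ε, fun a ha => ?_⟩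
    rintro _ ⟨x, hx, rfl⟩
    have h2ε : (0 : ℝ) < 2 / ε := by positivity
    have ha0 : a ≠ 0 := by
      intro h; rw [h, norm_zero] at ha; linarith
    have hinv : ‖a⁻¹‖ < ε := by
      rw [norm_inv]
      calc ‖a‖⁻¹ ≤ (2 / ε)⁻¹ := by
            apply inv_anti₀ h2ε ha
        _ = ε / 2 := by field_simp
        _ < ε := by linarith
    refine ⟨a⁻¹ • f x, key a⁻¹ hinv x hx, ?_⟩
    show a • a⁻¹ • f x = f x
    rw [smul_smul, mul_inv_cancel₀ ha0, one_smul]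
  · intro hbound
    constructor
    · let φ : C(X, Y) →+ (X →ᵤ[l] Y) :=
        { toFun := fun h => UniformOnFun.ofFun l ⇑h
          map_zero' := rfl
          map_add' := fun _ _ => rfl }
      exact IsInducing.topologicalAddGroup φ hind
    · let φ : C(X, Y) →ₗ[ℝ] (X → Y) :=
        { toFun := fun h => ⇑h
          map_add' := fun _ _ => rfl
          map_smul' := fun _ _ => rfl }
      exact UniformOnFun.continuousSMul_induced_of_image_bounded ℝ X Y C(X, Y) φ hind
        fun u s hs => hbound s hs u
end
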